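/- Let D, k > 0, ξ = sqrt(D/k), and x ≥ 0. Define Z(t) = (1/2)·erfc(√(Dt)/ξ − x/(2√(Dt))) + (e^{2x/ξ}/2)·erfc(√(Dt)/ξ + x/(2√(Dt))) for t > 0, where erfc is the complementary error function. Then ∫₀^∞ Z(t) dt = (1/(2k))·(1 + x·√(k/D)). -/

import Mathlib

/-!
Write `Z(t) = ½ erfc u + ½ e^{4ab} erfc v` with `u, v = a√t ∓ b/√t`, `a = √k`,
`b = x/(2√D)`. Both Gaussians `e^{-u²}` and `e^{4ab} e^{-v²}` equal `e^{2ab} e^{-(a²t + b²/t)}`,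
so `Z'` is elementary, and so is `t Z'`: it is a combination of the derivatives of
`√t e^{-(a²t + b²/t)}`, `erfc u` and `e^{4ab} erfc v`. Integrating `∫ Z = [t Z] - ∫ t Z'` by parts
therefore gives an explicit primitive of `Z`. It tends to `0` at infinity, because
`erfc z ≤ 2 e^{-z²}` for `z ≥ 0`, and to `-(1/(2a²) + b/a)` as `t → 0⁺`, where `erfc u → 2`
and `erfc v → 0` (for `b = 0` both tend to `1`). Hence `∫₀^∞ Z = 1/(2a²) + b/a`.
-/

open Real Filter MeasureTheory

noncomputable def erfc (z : ℝ) : ℝ :=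
  (2 / Real.sqrt Real.pi) * ∫ w in Set.Ioi z, Real.exp (-w ^ 2)

open Set Topology

lemma integrable_exp_neg_sq : Integrable fun w : ℝ => exp (-w ^ 2) := by
  simpa using integrable_exp_neg_mul_sq one_pos

lemma integral_exp_neg_sq : ∫ w : ℝ, exp (-w ^ 2) = √π := by
  simpa using integral_gaussian 1

lemma erfc_nonneg (z : ℝ) : 0 ≤ erfc z :=
  mul_nonneg (by positivity) (setIntegral_nonneg measurableSet_Ioi fun _ _ => (exp_pos _).le)

lemma erfc_add_erfc_neg (z : ℝ) : erfc z + erfc (-z) = 2 := by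
  have hsplit : (∫ w in Iic z, exp (-w ^ 2)) + ∫ w in Ioi z, exp (-w ^ 2) = √π := by
    rw [intervalIntegral.integral_Iic_add_Ioi integrable_exp_neg_sq.integrableOn
      integrable_exp_neg_sq.integrableOn, integral_exp_neg_sq]
  have hreflect : ∫ w in Ioi (-z), exp (-w ^ 2) = ∫ w in Iic z, exp (-w ^ 2) := by
    have h := integral_comp_neg_Ioi (-z) fun w => exp (-w ^ 2)
    simp only [neg_sq, neg_neg] at h
    exact h
  have hπ : 0 < √π := sqrt_pos.2 pi_pos
  unfold erfc
  rw [hreflect]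
  field_simp
  linarith

lemma erfc_le_two (z : ℝ) : erfc z ≤ 2 := by
  linarith [erfc_add_erfc_neg z, erfc_nonneg (-z)]

lemma erfc_zero : erfc 0 = 1 := by
  have h := erfc_add_erfc_neg 0
  rw [neg_zero] at h
  linarith

lemma hasDerivAt_erfc (z : ℝ) : HasDerivAt erfc (-(2 / √π) * exp (-z ^ 2)) z := by
  have hcont : Continuous fun w : ℝ => exp (-w ^ 2) := by fun_prop
  have hprim : HasDerivAt (fun u => ∫ w in (0 : ℝ)..u, exp (-w ^ 2)) (exp (-z ^ 2)) z :=
    intervalIntegral.integral_hasDerivAt_right (hcont.intervalIntegrable _ _)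
      (hcont.stronglyMeasurableAtFilter _ _) hcont.continuousAt
  have herfc : erfc = fun u =>
      2 / √π * ((∫ w in Ioi 0, exp (-w ^ 2)) - ∫ w in (0 : ℝ)..u, exp (-w ^ 2)) := by
    funext u
    rw [erfc, ← intervalIntegral.integral_interval_add_Ioi (a := 0) (b := u)
      integrable_exp_neg_sq.integrableOn integrable_exp_neg_sq.integrableOn, add_sub_cancel_left]
  rw [herfc]
  exact ((hprim.const_sub _).const_mul (2 / √π)).congr_deriv (by ring)

lemma continuous_erfc : Continuous erfc :=
  continuous_iff_continuousAt.2 fun z => (hasDerivAt_erfc z).continuousAt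

-- On `w ≥ z ≥ 0` one has `w ^ 2 ≥ z ^ 2 + (w - z) ^ 2`.
lemma erfc_le_two_mul_exp_neg_sq {z : ℝ} (hz : 0 ≤ z) : erfc z ≤ 2 * exp (-z ^ 2) := by
  have hshift : Integrable fun w => exp (-(w - z) ^ 2) := integrable_exp_neg_sq.comp_sub_right z
  have hbound : ∫ w in Ioi z, exp (-w ^ 2) ≤ exp (-z ^ 2) * √π :=
    calc ∫ w in Ioi z, exp (-w ^ 2)
        ≤ ∫ w in Ioi z, exp (-z ^ 2) * exp (-(w - z) ^ 2) := by
          refine setIntegral_mono_on integrable_exp_neg_sq.integrableOn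
            (hshift.const_mul _).integrableOn measurableSet_Ioi fun w hw => ?_
          rw [← exp_add, exp_le_exp]
          nlinarith [mem_Ioi.1 hw]
      _ ≤ exp (-z ^ 2) * ∫ w, exp (-(w - z) ^ 2) := by
          rw [integral_const_mul]
          exact mul_le_mul_of_nonneg_left
            (setIntegral_le_integral hshift (.of_forall fun _ => (exp_pos _).le)) (exp_pos _).le
      _ = exp (-z ^ 2) * √π := by
          rw [integral_sub_right_eq_self (fun w => exp (-w ^ 2)), integral_exp_neg_sq]
  have hπ : 0 < √π := sqrt_pos.2 pi_pos
  calc erfc z ≤ 2 / √π * (exp (-z ^ 2) * √π) := by unfold erfc; gcongr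
    _ = 2 * exp (-z ^ 2) := by field_simp

lemma tendsto_erfc_atTop : Tendsto erfc atTop (𝓝 0) := by
  have hgauss : Tendsto (fun z : ℝ => 2 * exp (-z ^ 2)) atTop (𝓝 0) := by
    simpa using (tendsto_exp_atBot.comp
      (tendsto_neg_atTop_atBot.comp (tendsto_pow_atTop two_ne_zero))).const_mul 2
  exact squeeze_zero' (.of_forall erfc_nonneg)
    (eventually_atTop.2 ⟨0, fun _ => erfc_le_two_mul_exp_neg_sq⟩) hgauss

lemma tendsto_erfc_atBot : Tendsto erfc atBot (𝓝 2) := by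
  have h := (tendsto_erfc_atTop.comp tendsto_neg_atBot_atTop).const_sub 2
  rw [sub_zero] at h
  exact h.congr fun z => by simp only [Function.comp_apply]; linarith [erfc_add_erfc_neg z]

theorem integral_Ioi_of_hasDerivAt_of_nonneg_of_tendsto_nhdsGT {g g' : ℝ → ℝ} {a l₀ l : ℝ}
    (hg₀ : Tendsto g (𝓝[>] a) (𝓝 l₀)) (hderiv : ∀ x ∈ Ioi a, HasDerivAt g (g' x) x)
    (g'pos : ∀ x ∈ Ioi a, 0 ≤ g' x) (hg : Tendsto g atTop (𝓝 l)) :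
    ∫ x in Ioi a, g' x = l - l₀ := by
  set G := Function.update g a l₀
  have hGg : ∀ x ∈ Ioi a, G x = g x := fun x hx => Function.update_of_ne (ne_of_gt hx) _ _
  have hcont : ContinuousWithinAt G (Ici a) a := by
    rw [← continuousWithinAt_Ioi_iff_Ici, ContinuousWithinAt, show G a = l₀ from
      Function.update_self ..]
    exact hg₀.congr' (eventually_nhdsWithin_of_forall fun x hx => (hGg x hx).symm)
  have hGderiv : ∀ x ∈ Ioi a, HasDerivAt G (g' x) x := fun x hx =>
    (hderiv x hx).congr_of_eventuallyEq (eventually_of_mem (Ioi_mem_nhds hx) hGg)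
  have hGtop : Tendsto G atTop (𝓝 l) :=
    hg.congr' (eventually_of_mem (Ioi_mem_atTop a) fun x hx => (hGg x hx).symm)
  simpa [G] using integral_Ioi_of_hasDerivAt_of_nonneg hcont hGderiv g'pos hGtop

section Deviation

variable (a b : ℝ)

-- `deviation √k (x / (2 * √D))` is the function `Z` of the theorem.
noncomputable def deviation (t : ℝ) : ℝ :=
  1 / 2 * erfc (a * √t - b / √t) + exp (4 * (a * b)) / 2 * erfc (a * √t + b / √t)

noncomputable def deviationPrimitive (t : ℝ) : ℝ :=
  t * deviation a b t - exp (2 * (a * b)) / (a * √π) * (√t * exp (-(a ^ 2 * t + b ^ 2 / t)))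
    - (1 / (4 * a ^ 2) + b / (2 * a)) * erfc (a * √t - b / √t)
    - (1 / (4 * a ^ 2) - b / (2 * a)) * exp (4 * (a * b)) * erfc (a * √t + b / √t)

variable {a b}

lemma exp_neg_sq_mul_sqrt_add_div_sqrt {t : ℝ} (ht : 0 < t) :
    exp (-(a * √t + b / √t) ^ 2) = exp (-(2 * (a * b))) * exp (-(a ^ 2 * t + b ^ 2 / t)) := by
  have hs : √t ≠ 0 := (sqrt_pos.2 ht).ne'
  rw [← exp_add]
  congr 1
  field_simp
  rw [sq_sqrt ht.le]
  ring

lemma hasDerivAt_mul_sqrt_add_div_sqrt {t : ℝ} (ht : 0 < t) :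
    HasDerivAt (fun s => a * √s + b / √s) ((a - b / t) / (2 * √t)) t := by
  have hs : √t ≠ 0 := (sqrt_pos.2 ht).ne'
  have hsqrt := hasDerivAt_sqrt ht.ne'
  refine ((hsqrt.const_mul a).add ((hasDerivAt_const t b).div hsqrt hs)).congr_deriv ?_
  field_simp
  rw [sq_sqrt ht.le]
  ring

lemma hasDerivAt_erfc_mul_sqrt_add_div_sqrt {t : ℝ} (ht : 0 < t) :
    HasDerivAt (fun s => erfc (a * √s + b / √s))
      (-(2 / √π) * exp (-(2 * (a * b))) * exp (-(a ^ 2 * t + b ^ 2 / t)) *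
        ((a - b / t) / (2 * √t))) t := by
  have h := (hasDerivAt_erfc _).comp t (hasDerivAt_mul_sqrt_add_div_sqrt (a := a) (b := b) ht)
  rw [exp_neg_sq_mul_sqrt_add_div_sqrt ht, ← mul_assoc] at h
  exact h

lemma exp_neg_sq_mul_sqrt_sub_div_sqrt {t : ℝ} (ht : 0 < t) :
    exp (-(a * √t - b / √t) ^ 2) = exp (2 * (a * b)) * exp (-(a ^ 2 * t + b ^ 2 / t)) := by
  simpa only [neg_div, ← sub_eq_add_neg, mul_neg, neg_neg, neg_sq] using
    exp_neg_sq_mul_sqrt_add_div_sqrt (a := a) (b := -b) ht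

lemma hasDerivAt_erfc_mul_sqrt_sub_div_sqrt {t : ℝ} (ht : 0 < t) :
    HasDerivAt (fun s => erfc (a * √s - b / √s))
      (-(2 / √π) * exp (2 * (a * b)) * exp (-(a ^ 2 * t + b ^ 2 / t)) *
        ((a + b / t) / (2 * √t))) t := by
  simpa only [neg_div, ← sub_eq_add_neg, mul_neg, neg_neg, neg_sq, sub_neg_eq_add] using
    hasDerivAt_erfc_mul_sqrt_add_div_sqrt (a := a) (b := -b) ht

lemma hasDerivAt_deviation {t : ℝ} (ht : 0 < t) :
    HasDerivAt (deviation a b)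
      (-(a * exp (2 * (a * b)) / √π) * exp (-(a ^ 2 * t + b ^ 2 / t)) / √t) t := by
  have hu := hasDerivAt_erfc_mul_sqrt_sub_div_sqrt (a := a) (b := b) ht
  have hv := hasDerivAt_erfc_mul_sqrt_add_div_sqrt (a := a) (b := b) ht
  refine ((hu.const_mul (1 / 2)).add (hv.const_mul (exp (4 * (a * b)) / 2))).congr_deriv ?_
  have hs : √t ≠ 0 := (sqrt_pos.2 ht).ne'
  have hπ : √π ≠ 0 := (sqrt_pos.2 pi_pos).ne'
  rw [show 4 * (a * b) = 2 * (a * b) + 2 * (a * b) by ring, exp_add, exp_neg (2 * (a * b))]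
  field_simp
  ring

lemma hasDerivAt_deviationPrimitive (ha : a ≠ 0) {t : ℝ} (ht : 0 < t) :
    HasDerivAt (deviationPrimitive a b) (deviation a b t) t := by
  have hu := hasDerivAt_erfc_mul_sqrt_sub_div_sqrt (a := a) (b := b) ht
  have hv := hasDerivAt_erfc_mul_sqrt_add_div_sqrt (a := a) (b := b) ht
  have hexponent :
      HasDerivAt (fun s => -(a ^ 2 * s + b ^ 2 / s)) (-(a ^ 2 - b ^ 2 / t ^ 2)) t := by
    refine (((hasDerivAt_id' t).const_mul (a ^ 2)).add
      ((hasDerivAt_const t (b ^ 2)).div (hasDerivAt_id' t) ht.ne')).neg.congr_deriv ?_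
    ring
  refine ((((hasDerivAt_id' t).mul (hasDerivAt_deviation ht)).sub
    (((hasDerivAt_sqrt ht.ne').mul hexponent.exp).const_mul _)).sub (hu.const_mul _)).sub
    (hv.const_mul _) |>.congr_deriv ?_
  have hs : √t ≠ 0 := (sqrt_pos.2 ht).ne'
  have hπ : √π ≠ 0 := (sqrt_pos.2 pi_pos).ne'
  have hts : √t ^ 2 = t := sq_sqrt ht.le
  simp only [one_mul]
  rw [show 4 * (a * b) = 2 * (a * b) + 2 * (a * b) by ring, exp_add, exp_neg (2 * (a * b))]
  have hA : exp (2 * (a * b)) ≠ 0 := (exp_pos _).ne'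
  generalize exp (2 * (a * b)) = A at hA ⊢
  generalize exp (-(a ^ 2 * t + b ^ 2 / t)) = P
  generalize √t = s at hs hts ⊢
  subst hts
  field_simp
  ring

lemma deviation_nonneg (t : ℝ) : 0 ≤ deviation a b t := by
  have := erfc_nonneg (a * √t - b / √t)
  have := erfc_nonneg (a * √t + b / √t)
  unfold deviation
  positivity

lemma tendsto_mul_sqrt_add_div_sqrt_atTop (ha : 0 < a) (b : ℝ) :
    Tendsto (fun t => a * √t + b / √t) atTop atTop :=
  (tendsto_sqrt_atTop.const_mul_atTop ha).atTop_add
    (tendsto_const_nhds.div_atTop tendsto_sqrt_atTop)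

lemma tendsto_mul_sqrt_sub_div_sqrt_atTop (ha : 0 < a) (b : ℝ) :
    Tendsto (fun t => a * √t - b / √t) atTop atTop := by
  simpa only [neg_div, ← sub_eq_add_neg] using tendsto_mul_sqrt_add_div_sqrt_atTop ha (-b)

lemma tendsto_rpow_mul_exp_neg_add_div_atTop (ha : a ≠ 0) (r : ℝ) :
    Tendsto (fun t => t ^ r * exp (-(a ^ 2 * t + b ^ 2 / t))) atTop (𝓝 0) := by
  refine squeeze_zero' ?_ ?_
    (tendsto_rpow_mul_exp_neg_mul_atTop_nhds_zero r (a ^ 2) (by positivity))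
  · filter_upwards [eventually_ge_atTop 0] with t ht
    positivity
  · filter_upwards [eventually_gt_atTop 0] with t ht
    gcongr
    have : 0 ≤ b ^ 2 / t := by positivity
    linarith

lemma eventually_deviation_le (ha : 0 < a) :
    ∀ᶠ t in atTop,
      deviation a b t ≤ 2 * exp (2 * (a * b)) * exp (-(a ^ 2 * t + b ^ 2 / t)) := by
  filter_upwards [eventually_gt_atTop 0,
    (tendsto_mul_sqrt_sub_div_sqrt_atTop ha b).eventually_ge_atTop 0,
    (tendsto_mul_sqrt_add_div_sqrt_atTop ha b).eventually_ge_atTop 0] with t ht hu hv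
  have hu' := erfc_le_two_mul_exp_neg_sq hu
  have hv' := erfc_le_two_mul_exp_neg_sq hv
  rw [exp_neg_sq_mul_sqrt_sub_div_sqrt ht] at hu'
  rw [exp_neg_sq_mul_sqrt_add_div_sqrt ht] at hv'
  calc deviation a b t
      ≤ 1 / 2 * (2 * (exp (2 * (a * b)) * exp (-(a ^ 2 * t + b ^ 2 / t)))) +
        exp (4 * (a * b)) / 2 *
          (2 * (exp (-(2 * (a * b))) * exp (-(a ^ 2 * t + b ^ 2 / t)))) := by
        unfold deviation
        gcongr
    _ = 2 * exp (2 * (a * b)) * exp (-(a ^ 2 * t + b ^ 2 / t)) := by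
        rw [show 4 * (a * b) = 2 * (a * b) + 2 * (a * b) by ring, exp_add, exp_neg (2 * (a * b))]
        field_simp
        ring

lemma tendsto_deviationPrimitive_atTop (ha : 0 < a) :
    Tendsto (deviationPrimitive a b) atTop (𝓝 0) := by
  have hdecay := tendsto_rpow_mul_exp_neg_add_div_atTop (b := b) ha.ne'
  have hmul : Tendsto (fun t => t * deviation a b t) atTop (𝓝 0) := by
    have hbound := (hdecay 1).const_mul (2 * exp (2 * (a * b)))
    rw [mul_zero] at hbound
    refine squeeze_zero' ?_ ?_ hbound
    · filter_upwards [eventually_ge_atTop 0] with t ht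
      exact mul_nonneg ht (deviation_nonneg t)
    · filter_upwards [eventually_ge_atTop 0, eventually_deviation_le ha] with t ht hle
      calc t * deviation a b t
          ≤ t * (2 * exp (2 * (a * b)) * exp (-(a ^ 2 * t + b ^ 2 / t))) := by gcongr
        _ = _ := by rw [rpow_one]; ring
  have hsqrt : Tendsto (fun t => √t * exp (-(a ^ 2 * t + b ^ 2 / t))) atTop (𝓝 0) := by
    simpa only [sqrt_eq_rpow] using hdecay (1 / 2)
  have hu := tendsto_erfc_atTop.comp (tendsto_mul_sqrt_sub_div_sqrt_atTop ha b)
  have hv := tendsto_erfc_atTop.comp (tendsto_mul_sqrt_add_div_sqrt_atTop ha b)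
  have h := ((hmul.sub (hsqrt.const_mul (exp (2 * (a * b)) / (a * √π)))).sub
    (hu.const_mul (1 / (4 * a ^ 2) + b / (2 * a)))).sub
    (hv.const_mul ((1 / (4 * a ^ 2) - b / (2 * a)) * exp (4 * (a * b))))
  rw [show (0 : ℝ) - _ * 0 - _ * 0 - _ * 0 = 0 by ring] at h
  exact h

lemma tendsto_sqrt_nhdsGT_zero : Tendsto (√·) (𝓝[>] 0) (𝓝[>] 0) :=
  tendsto_nhdsWithin_iff.2
    ⟨(continuous_sqrt.tendsto' 0 0 sqrt_zero).mono_left nhdsWithin_le_nhds,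
      eventually_nhdsWithin_of_forall fun _ ht => sqrt_pos.2 ht⟩

lemma tendsto_mul_deviation_nhdsGT_zero :
    Tendsto (fun t => t * deviation a b t) (𝓝[>] 0) (𝓝 0) := by
  have hbound := (tendsto_id.mono_left (nhdsWithin_le_nhds (a := (0 : ℝ)) (s := Ioi 0))).mul_const
    (1 + exp (4 * (a * b)))
  rw [zero_mul] at hbound
  refine squeeze_zero' ?_ ?_ hbound
  · filter_upwards [self_mem_nhdsWithin] with t ht
    exact mul_nonneg (le_of_lt ht) (deviation_nonneg t)
  · filter_upwards [self_mem_nhdsWithin] with t ht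
    have := erfc_le_two (a * √t - b / √t)
    have := erfc_le_two (a * √t + b / √t)
    have hle : deviation a b t ≤ 1 + exp (4 * (a * b)) := by
      unfold deviation
      nlinarith [exp_pos (4 * (a * b))]
    exact mul_le_mul_of_nonneg_left hle (le_of_lt ht)

lemma tendsto_sqrt_mul_exp_neg_add_div_nhdsGT_zero :
    Tendsto (fun t => √t * exp (-(a ^ 2 * t + b ^ 2 / t))) (𝓝[>] 0) (𝓝 0) := by
  refine squeeze_zero' (.of_forall fun t => by positivity) ?_
    (tendsto_nhdsWithin_iff.1 tendsto_sqrt_nhdsGT_zero).1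
  filter_upwards [self_mem_nhdsWithin] with t ht
  have : 0 ≤ a ^ 2 * t + b ^ 2 / t := by have : 0 < t := ht; positivity
  exact mul_le_of_le_one_right (sqrt_nonneg t) (exp_le_one_iff.2 (by linarith))

lemma tendsto_deviationPrimitive_nhdsGT_zero (ha : 0 < a) (hb : 0 ≤ b) :
    Tendsto (deviationPrimitive a b) (𝓝[>] 0) (𝓝 (-(1 / (2 * a ^ 2) + b / a))) := by
  have hsqrt : Tendsto (fun t => a * √t) (𝓝[>] 0) (𝓝 0) := by
    simpa using ((tendsto_nhdsWithin_iff.1 tendsto_sqrt_nhdsGT_zero).1).const_mul a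
  have hmul := tendsto_mul_deviation_nhdsGT_zero (a := a) (b := b)
  have hgauss := tendsto_sqrt_mul_exp_neg_add_div_nhdsGT_zero (a := a) (b := b)
  rcases hb.eq_or_lt with rfl | hb
  · have herfc : Tendsto (fun t => erfc (a * √t)) (𝓝[>] 0) (𝓝 1) :=
      erfc_zero ▸ (continuous_erfc.tendsto 0).comp hsqrt
    have h := ((hmul.sub (hgauss.const_mul (exp (2 * (a * 0)) / (a * √π)))).sub
      (herfc.const_mul (1 / (4 * a ^ 2) + 0 / (2 * a)))).sub
      (herfc.const_mul ((1 / (4 * a ^ 2) - 0 / (2 * a)) * exp (4 * (a * 0))))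
    convert h using 2
    · simp [deviationPrimitive]
    · simp only [mul_zero, exp_zero, zero_div, add_zero, sub_zero]
      field_simp
      ring
  · have hpole : Tendsto (fun t => b / √t) (𝓝[>] 0) atTop := by
      simpa [div_eq_mul_inv] using
        tendsto_sqrt_nhdsGT_zero.inv_tendsto_nhdsGT_zero.const_mul_atTop hb
    have hu := tendsto_erfc_atBot.comp (hsqrt.add_atBot (tendsto_neg_atTop_atBot.comp hpole))
    have hv := tendsto_erfc_atTop.comp (hsqrt.add_atTop hpole)
    have h := ((hmul.sub (hgauss.const_mul (exp (2 * (a * b)) / (a * √π)))).sub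
      (hu.const_mul (1 / (4 * a ^ 2) + b / (2 * a)))).sub
      (hv.const_mul ((1 / (4 * a ^ 2) - b / (2 * a)) * exp (4 * (a * b))))
    convert h using 2
    · simp [deviationPrimitive, sub_eq_add_neg]
    · field_simp
      ring

theorem integral_deviation (ha : 0 < a) (hb : 0 ≤ b) :
    ∫ t in Ioi 0, deviation a b t = 1 / (2 * a ^ 2) + b / a := by
  rw [integral_Ioi_of_hasDerivAt_of_nonneg_of_tendsto_nhdsGT
    (tendsto_deviationPrimitive_nhdsGT_zero ha hb)
    (fun t ht => hasDerivAt_deviationPrimitive ha.ne' ht) (fun t _ => deviation_nonneg t)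
    (tendsto_deviationPrimitive_atTop ha)]
  ring

end Deviation

theorem stmt4 (D k x : ℝ) (hD : 0 < D) (hk : 0 < k) (hx : 0 ≤ x)
    (ξ : ℝ) (hξ : ξ = Real.sqrt (D / k))
    (Z : ℝ → ℝ)
    (hZ : ∀ t > 0, Z t =
      (1 / 2) * erfc (Real.sqrt (D * t) / ξ - x / (2 * Real.sqrt (D * t))) +
      (Real.exp (2 * x / ξ) / 2) * erfc (Real.sqrt (D * t) / ξ + x / (2 * Real.sqrt (D * t)))) :
    ∫ t in Set.Ioi (0:ℝ), Z t = (1 / (2 * k)) * (1 + x * Real.sqrt (k / D)) := by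
  have hsD : 0 < √D := sqrt_pos.2 hD
  have hsk : 0 < √k := sqrt_pos.2 hk
  have hZ_eq : EqOn Z (deviation √k (x / (2 * √D))) (Ioi 0) := by
    intro t ht
    have hst : 0 < √t := sqrt_pos.2 ht
    have hdrift : √D * √t / (√D / √k) = √k * √t := by field_simp
    have hpole : x / (2 * (√D * √t)) = x / (2 * √D) / √t := by field_simp
    have hweight : 2 * x / (√D / √k) = 4 * (√k * (x / (2 * √D))) := by field_simp; ring
    rw [hZ t ht, hξ, sqrt_div hD.le, sqrt_mul hD.le, hdrift, hpole, hweight, deviation]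
  rw [setIntegral_congr_fun measurableSet_Ioi hZ_eq, integral_deviation hsk (by positivity),
    sqrt_div hk.le]
  field_simp
  rw [sq_sqrt hk.le]
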